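/- Assume Hypothesis (Contra). Then: (i) S_{Q,V}(P), S_{Q,V}(R) and S_{Q,V}(T) are all nonzero; (ii) T < P < S and T < R < S (all inclusions strict); (iii) Z(S) ≤ T; and (iv) neither P nor R is abelian. -/

import Mathlib

open Subgroup

section Core

variable {S : Type*} [Group S]

/-- Conjugation by `s` as a homomorphism between subgroups `P` and `Q` of `S`,
when `s` conjugates `P` into `Q`. -/
def conjMap (s : S) (P Q : Subgroup S) (h : ∀ x ∈ P, s * x * s⁻¹ ∈ Q) : P →* Q where
  toFun x := ⟨s * ↑x * s⁻¹, h x x.2⟩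
  map_one' := by ext; simp
  map_mul' x y := by ext; push_cast; group

/-- The range in `S` of a homomorphism between subgroups of `S`. -/
def rngS {P Q : Subgroup S} (φ : P →* Q) : Subgroup S := (Q.subtype.comp φ).range

lemma rngS_le {P Q : Subgroup S} (φ : P →* Q) : rngS φ ≤ Q := by
  rintro x ⟨y, rfl⟩
  exact (φ y).2

/-- A fusion system on a group `S`: a collection of injective homomorphisms between
the subgroups of `S`, containing all homomorphisms induced by conjugation in `S`,
closed under composition and taking inverses of isomorphisms, and such that every
morphism factors as an isomorphism in the system followed by an inclusion. -/
structure FusionSystem (S : Type*) [Group S] where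
  Hom : ∀ P Q : Subgroup S, Set (P →* Q)
  inj : ∀ {P Q : Subgroup S} (φ : P →* Q), φ ∈ Hom P Q → Function.Injective φ
  conj_mem : ∀ (P Q : Subgroup S) (s : S) (h : ∀ x ∈ P, s * x * s⁻¹ ∈ Q),
    conjMap s P Q h ∈ Hom P Q
  comp_mem : ∀ {P Q R : Subgroup S} (φ : P →* Q) (ψ : Q →* R),
    φ ∈ Hom P Q → ψ ∈ Hom Q R → ψ.comp φ ∈ Hom P R
  inv_mem : ∀ {P Q : Subgroup S} (e : P ≃* Q), e.toMonoidHom ∈ Hom P Q →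
    e.symm.toMonoidHom ∈ Hom Q P
  factor : ∀ {P Q : Subgroup S} (φ : P →* Q) (hφ : φ ∈ Hom P Q),
    ∃ e : P ≃* rngS φ, e.toMonoidHom ∈ Hom P (rngS φ) ∧
      (Subgroup.inclusion (rngS_le φ)).comp e.toMonoidHom = φ

namespace FusionSystem

variable (F : FusionSystem S)

/-- The set of `F`-isomorphisms from `P` to `Q`. -/
def IsoF (P Q : Subgroup S) : Set (P ≃* Q) := {e | e.toMonoidHom ∈ F.Hom P Q}

/-- Two subgroups are `F`-conjugate if they are isomorphic in `F`. -/
def FConj (P Q : Subgroup S) : Prop := ∃ e : P ≃* Q, e.toMonoidHom ∈ F.Hom P Q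

/-- A subgroup `P ≤ S` is `F`-centric if `C_S(Q) ≤ Q` for every `Q` that is
`F`-conjugate to `P`. -/
def Centric (P : Subgroup S) : Prop :=
  ∀ Q : Subgroup S, F.FConj P Q → Subgroup.centralizer (Q : Set S) ≤ Q

end FusionSystem

/-- Conjugation gives a homomorphism from the normalizer of `P` to the automorphisms
of `P`. -/
def conjAut (P : Subgroup S) : (normalizer (P : Set S)) →* MulAut P where
  toFun g :=
    { toFun := fun x => ⟨↑g * ↑x * (↑g)⁻¹, (mem_normalizer_iff.mp g.2 ↑x).mp x.2⟩
      invFun := fun x => ⟨(↑g)⁻¹ * ↑x * ↑g, by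
        have := (mem_normalizer_iff.mp ((normalizer (P : Set S)).inv_mem g.2) (↑x)).mp x.2
        simpa using this⟩
      left_inv := fun x => by ext; simp [mul_assoc]
      right_inv := fun x => by ext; simp [mul_assoc]
      map_mul' := fun x y => by ext; push_cast; group }
  map_one' := by ext; simp
  map_mul' g h := by ext x; simp only [MulAut.mul_apply, MulEquiv.coe_mk, Equiv.coe_fn_mk]; push_cast; group

namespace FusionSystem

variable (F : FusionSystem S)

/-- The group `Aut_F(P)` of `F`-automorphisms of `P`, as a subgroup of `MulAut P`. -/
def AutF (P : Subgroup S) : Subgroup (MulAut P) where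
  carrier := {e | e.toMonoidHom ∈ F.Hom P P}
  one_mem' := by
    have h : ∀ x ∈ P, (1 : S) * x * (1 : S)⁻¹ ∈ P := by intro x hx; simpa using hx
    have h2 := F.conj_mem P P 1 h
    have he : conjMap (1 : S) P P h = (1 : MulAut P).toMonoidHom := by
      ext x; simp [conjMap]
    rwa [he] at h2
  mul_mem' := by
    intro a b ha hb
    have he : (a * b).toMonoidHom = a.toMonoidHom.comp b.toMonoidHom := by
      ext x; rfl
    simp only [Set.mem_setOf_eq] at *
    rw [he]
    exact F.comp_mem _ _ hb ha
  inv_mem' := by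
    intro a ha
    exact F.inv_mem a ha

end FusionSystem

/-- The inner automorphisms of (the group) `P`, as a subgroup of `MulAut P`. -/
def innAut (P : Type*) [Group P] : Subgroup (MulAut P) := (MulAut.conj : P →* MulAut P).range

lemma innAut_normal (P : Type*) [Group P] : (innAut P).Normal := by
  constructor
  rintro _ ⟨x, rfl⟩ g
  refine ⟨g x, ?_⟩
  ext y
  simp [MulAut.conj]

namespace FusionSystem

variable (F : FusionSystem S)

/-- `Inn(P)` as a subgroup of `Aut_F(P)`. -/
def innFOf (P : Subgroup S) : Subgroup (F.AutF P) := (innAut P).subgroupOf (F.AutF P)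

instance innFOf_normal (P : Subgroup S) : (F.innFOf P).Normal :=
  Subgroup.Normal.subgroupOf (innAut_normal P) _

/-- `Out_F(P) = Aut_F(P)/Inn(P)`. -/
def OutF (P : Subgroup S) : Type _ := F.AutF P ⧸ F.innFOf P

noncomputable instance (P : Subgroup S) : Group (F.OutF P) :=
  inferInstanceAs (Group (F.AutF P ⧸ F.innFOf P))

/-- The quotient map `Aut_F(P) → Out_F(P)`. -/
def outMk (P : Subgroup S) : F.AutF P →* F.OutF P := QuotientGroup.mk' (F.innFOf P)

/-- Conjugation gives a homomorphism `N_S(P) → Aut_F(P)`. -/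
def toAutF (P : Subgroup S) : (normalizer (P : Set S)) →* F.AutF P :=
  (conjAut P).codRestrict (F.AutF P) (fun g => by
    have h : ∀ x ∈ P, (↑g : S) * x * (↑g : S)⁻¹ ∈ P := fun x hx =>
      (mem_normalizer_iff.mp g.2 x).mp hx
    have h2 := F.conj_mem P P ↑g h
    have he : conjMap (↑g : S) P P h = (conjAut P g).toMonoidHom := by
      ext x; rfl
    rw [he] at h2
    exact h2)

/-- For `K ≤ N_S(P)`, the subgroup `Out_K(P) ≤ Out_F(P)` of classes of automorphisms
induced by conjugation by elements of `K`. -/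
noncomputable def outOf (P K : Subgroup S) (h : K ≤ (normalizer (P : Set S))) : Subgroup (F.OutF P) :=
  ((F.outMk P).comp ((F.toAutF P).comp (Subgroup.inclusion h))).range

/-- `Aut_S(P)` as a subgroup of `Aut_F(P)`. -/
def AutSF (P : Subgroup S) : Subgroup (F.AutF P) := (F.toAutF P).range

/-- `P` is fully automized (in `F`, at the prime `p`) if `Aut_S(P)` is a Sylow
`p`-subgroup of `Aut_F(P)`. -/
def FullyAutomized (p : ℕ) [Fact p.Prime] (P : Subgroup S) : Prop :=
  ∃ Syl : Sylow p (F.AutF P), (Syl : Subgroup (F.AutF P)) = F.AutSF P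

/-- `P` is receptive in `F` if every `F`-isomorphism `φ : Q → P` extends to the
subgroup `N_φ = {g ∈ N_S(Q) | φ ∘ c_g ∘ φ⁻¹ ∈ Aut_S(P)}`. -/
def Receptive (P : Subgroup S) : Prop :=
  ∀ (Q : Subgroup S) (φ : Q ≃* P), φ.toMonoidHom ∈ F.Hom Q P →
    ∃ N : Subgroup S,
      (∀ g : S, g ∈ N ↔ ∃ hg : g ∈ (normalizer (Q : Set S)), ∃ h ∈ (normalizer (P : Set S)), ∀ q : Q,
        (↑(φ ⟨g * ↑q * g⁻¹, (mem_normalizer_iff.mp hg ↑q).mp q.2⟩) : S)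
          = h * ↑(φ q) * h⁻¹) ∧
      ∃ ψ ∈ F.Hom N ⊤, ∀ (q : S) (hq : q ∈ Q) (hq' : q ∈ N),
        (↑(ψ ⟨q, hq'⟩) : S) = ↑(φ ⟨q, hq⟩)

/-- A fusion system is saturated if every `F`-conjugacy class of subgroups contains a
subgroup that is fully automized and receptive. -/
def Saturated (p : ℕ) [Fact p.Prime] : Prop :=
  ∀ P : Subgroup S, ∃ P' : Subgroup S, F.FConj P P' ∧
    F.FullyAutomized p P' ∧ F.Receptive P'

end FusionSystem

end Core

section SQV

open DirectSum

variable {S : Type*} [Group S]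

namespace FusionSystem

variable (F : FusionSystem S)

/-- Conjugation of `F`-automorphism groups by an `F`-isomorphism `e : Q ≃* L`:
`γ ↦ e⁻¹ ∘ γ ∘ e`. -/
def autConj {Q L : Subgroup S} (e : Q ≃* L) (he : e.toMonoidHom ∈ F.Hom Q L) :
    F.AutF L →* F.AutF Q where
  toFun γ := ⟨(e.trans γ.1).trans e.symm, by
    have h1 : ((e.trans γ.1).trans e.symm).toMonoidHom
        = (e.symm.toMonoidHom.comp γ.1.toMonoidHom).comp e.toMonoidHom := by
      ext x; rfl
    show ((e.trans γ.1).trans e.symm).toMonoidHom ∈ F.Hom Q Q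
    rw [h1]
    exact F.comp_mem _ _ he (F.comp_mem _ _ γ.2 (F.inv_mem e he))⟩
  map_one' := by
    ext x
    simp
  map_mul' a b := by
    ext x
    simp [MulAut.mul_apply]

/-- The induced homomorphism `Out_F(L) → Out_F(Q)` given by `[γ] ↦ [e⁻¹ ∘ γ ∘ e]`. -/
def outConj {Q L : Subgroup S} (e : Q ≃* L) (he : e.toMonoidHom ∈ F.Hom Q L) :
    F.OutF L →* F.OutF Q :=
  QuotientGroup.map _ _ (F.autConj e he) (by
    intro γ hγ
    have hγ' : (γ : MulAut ↥L) ∈ innAut ↥L := hγ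
    obtain ⟨x, hx⟩ := hγ'
    show (F.autConj e he) γ ∈ F.innFOf Q
    refine ⟨e.symm x, ?_⟩
    have hx' : ∀ z : L, (γ : MulAut L) z = x * z * x⁻¹ := by
      intro z
      rw [← hx]
      rfl
    ext y
    simp only [MulAut.conj_apply]
    have h2 : ((F.AutF Q).subtype ((F.autConj e he) γ)) y = e.symm ((γ : MulAut L) (e y)) := rfl
    rw [h2, hx' (e y)]
    push_cast [map_mul, map_inv, MulEquiv.symm_apply_apply]
    ring_nf)

end FusionSystem

/-- The relative trace of an action with respect to a subgroup `K ≤ G`, given by summing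
the action of a set of representatives of the left cosets of `K` in `G`. -/
noncomputable def cosetTrace {p : ℕ} {V : Type*} [AddCommGroup V] [Module (ZMod p) V]
    {G : Type*} [Group G] [Finite G] (K : Subgroup G) (σ : G →* (V →ₗ[ZMod p] V)) :
    V →ₗ[ZMod p] V :=
  haveI : Finite (G ⧸ K) := Quotient.finite _
  haveI := Fintype.ofFinite (G ⧸ K)
  ∑ x : G ⧸ K, σ (Quotient.out x)

namespace FusionSystem

variable (F : FusionSystem S)

/-- A choice of an `F`-isomorphism `Q ≃* L` for `F`-conjugate subgroups. -/
noncomputable def chosenIso {Q L : Subgroup S} (hc : F.FConj Q L) : Q ≃* L := hc.choose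

lemma chosenIso_mem {Q L : Subgroup S} (hc : F.FConj Q L) :
    (F.chosenIso hc).toMonoidHom ∈ F.Hom Q L := hc.choose_spec

end FusionSystem

/-- The conjugate `ˣL` of a subgroup. -/
def conjSub (x : S) (L : Subgroup S) : Subgroup S :=
  Subgroup.map (MulAut.conj x).toMonoidHom L

lemma conjSub_one (L : Subgroup S) : conjSub 1 L = L := by
  ext z
  simp [conjSub, Subgroup.mem_map, MulAut.conj_apply]

lemma conjSub_mul (x y : S) (L : Subgroup S) :
    conjSub (x * y) L = conjSub x (conjSub y L) := by
  ext z
  simp only [conjSub, Subgroup.mem_map, MulEquiv.coe_toMonoidHom, MulAut.conj_apply]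
  constructor
  · rintro ⟨a, ha, rfl⟩
    exact ⟨y * a * y⁻¹, ⟨a, ha, rfl⟩, by group⟩
  · rintro ⟨b, ⟨a, ha, rfl⟩, rfl⟩
    exact ⟨a, ha, by group⟩

/-- Conjugation as an isomorphism `L ≃* ˣL = L'`. -/
def conjEquiv (r : S) (L L' : Subgroup S) (h : conjSub r L = L') : L ≃* L' :=
  (MulEquiv.subgroupMap (MulAut.conj r) L).trans (MulEquiv.subgroupCongr h)

lemma conjEquiv_mem (F : FusionSystem S) (r : S) (L L' : Subgroup S) (h : conjSub r L = L') :
    (conjEquiv r L L' h).toMonoidHom ∈ F.Hom L L' := by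
  have hmem : ∀ x ∈ L, r * x * r⁻¹ ∈ L' := by
    intro x hx
    rw [← h]
    exact ⟨x, hx, rfl⟩
  have he : conjMap r L L' hmem = (conjEquiv r L L' h).toMonoidHom := by
    ext x; rfl
  rw [← he]
  exact F.conj_mem L L' r hmem

namespace FusionSystem

variable (F : FusionSystem S) {Q₀ : Subgroup S}
variable {p : ℕ} {V : Type*} [AddCommGroup V] [Module (ZMod p) V]

/-- The action of `N_P(L)` on `V` twisted by an `F`-isomorphism `α : Q₀ ≃* L`, i.e. the
action of `N_P(L)` on `^αV` through `N_P(L) → Out_F(L) → Out_F(Q₀)`. -/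
noncomputable def dpActionAt (ρ : Representation (ZMod p) (F.OutF Q₀) V)
    {L : Subgroup S} (α : Q₀ ≃* L) (hα : α.toMonoidHom ∈ F.Hom Q₀ L) (P : Subgroup S) :
    ↥(P ⊓ (normalizer (L : Set S))) →* (V →ₗ[ZMod p] V) :=
  (((ρ : F.OutF Q₀ →* (V →ₗ[ZMod p] V)).comp (F.outConj α hα)).comp (F.outMk L)).comp
    ((F.toAutF L).comp (Subgroup.inclusion inf_le_right))

/-- The action of `N_P(L)` on `^αV` for the chosen isomorphism `α : Q₀ ≃* L`. -/
noncomputable def dpAction (ρ : Representation (ZMod p) (F.OutF Q₀) V)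
    {L : Subgroup S} (hc : F.FConj Q₀ L) (P : Subgroup S) :
    ↥(P ⊓ (normalizer (L : Set S))) →* (V →ₗ[ZMod p] V) :=
  F.dpActionAt ρ (F.chosenIso hc) (F.chosenIso_mem hc) P

variable [Finite S]

/-- The summand `V_{α,L}(P) = tr_L^{N_P(L)}(^αV)` of the Díaz–Park Mackey functor. -/
noncomputable def dpSummand (ρ : Representation (ZMod p) (F.OutF Q₀) V)
    (P : Subgroup S) {L : Subgroup S} (hc : F.FConj Q₀ L) : Submodule (ZMod p) V :=
  LinearMap.range (cosetTrace (L.subgroupOf (P ⊓ (normalizer (L : Set S)))) (F.dpAction ρ hc P))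

/-- The setoid of `P`-conjugacy on the subgroups of `P` that are `F`-conjugate to `Q₀`. -/
def dpRel (Q₀ P : Subgroup S) : Setoid {L : Subgroup S // L ≤ P ∧ F.FConj Q₀ L} where
  r L₁ L₂ := ∃ x ∈ P, conjSub x L₁.1 = L₂.1
  iseqv := by
    constructor
    · intro L
      exact ⟨1, P.one_mem, conjSub_one _⟩
    · rintro L₁ L₂ ⟨x, hx, hconj⟩
      refine ⟨x⁻¹, P.inv_mem hx, ?_⟩
      rw [← hconj, ← conjSub_mul]
      simp [conjSub_one]
    · rintro L₁ L₂ L₃ ⟨x, hx, hx'⟩ ⟨y, hy, hy'⟩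
      exact ⟨y * x, P.mul_mem hy hx, by rw [conjSub_mul, hx', hy']⟩

/-- The index set of the Díaz–Park direct sum decomposition of `S_{Q₀,V}(P)`:
`P`-conjugacy classes of subgroups of `P` that are `F`-conjugate to `Q₀`. -/
def SQVIndex (Q₀ P : Subgroup S) : Type _ := Quotient (F.dpRel Q₀ P)

/-- The chosen representative of a `P`-conjugacy class. -/
noncomputable def dpRep {Q₀ P : Subgroup S} (c : F.SQVIndex Q₀ P) : Subgroup S :=
  (Quotient.out c).1

lemma dpRep_le {Q₀ P : Subgroup S} (c : F.SQVIndex Q₀ P) : F.dpRep c ≤ P :=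
  (Quotient.out c).2.1

lemma dpRep_fconj {Q₀ P : Subgroup S} (c : F.SQVIndex Q₀ P) : F.FConj Q₀ (F.dpRep c) :=
  (Quotient.out c).2.2

/-- The value `S_{Q₀,V}(P)` of the Díaz–Park Mackey functor:
the direct sum of `tr_L^{N_P(L)}(^αV)` over the `P`-conjugacy classes of subgroups `L ≤ P`
`F`-conjugate to `Q₀` (with chosen representatives and chosen isomorphisms). -/
noncomputable abbrev SQVModule (ρ : Representation (ZMod p) (F.OutF Q₀) V) (P : Subgroup S) :
    Type _ :=
  ⨁ (c : F.SQVIndex Q₀ P), ↥(F.dpSummand ρ P (F.dpRep_fconj c))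

/-- The inclusion of the summand indexed by the class `c` into `S_{Q₀,V}(P)`. -/
noncomputable def dpOf (ρ : Representation (ZMod p) (F.OutF Q₀) V) (P : Subgroup S)
    (c : F.SQVIndex Q₀ P) :
    ↥(F.dpSummand ρ P (F.dpRep_fconj c)) →ₗ[ZMod p] F.SQVModule ρ P :=
  letI := Classical.decEq (F.SQVIndex Q₀ P)
  DirectSum.lof (ZMod p) (F.SQVIndex Q₀ P) (fun c => ↥(F.dpSummand ρ P (F.dpRep_fconj c))) c

/-- The component of an element of `S_{Q₀,V}(P)` at the class `c`, as an element of `V`. -/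
noncomputable def dpComp {ρ : Representation (ZMod p) (F.OutF Q₀) V} {P : Subgroup S}
    (x : F.SQVModule ρ P) (c : F.SQVIndex Q₀ P) : V :=
  ((x : ⨁ (c : F.SQVIndex Q₀ P), ↥(F.dpSummand ρ P (F.dpRep_fconj c))) c : V)

/-- The element `[α_{L'}⁻¹ ∘ c_r ∘ α_L] ∈ Aut_F(Q₀)` transporting between the twisted
modules `^{c_r ∘ α_L}V` and `^{α_{L'}}V`. -/
noncomputable def transport {Q₀ L L' : Subgroup S} (hc : F.FConj Q₀ L) (hc' : F.FConj Q₀ L')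
    (r : S) (h : conjSub r L = L') : F.AutF Q₀ :=
  ⟨((F.chosenIso hc).trans (conjEquiv r L L' h)).trans (F.chosenIso hc').symm, by
    show (((F.chosenIso hc).trans (conjEquiv r L L' h)).trans (F.chosenIso hc').symm).toMonoidHom
      ∈ F.Hom Q₀ Q₀
    have h1 : (((F.chosenIso hc).trans (conjEquiv r L L' h)).trans
        (F.chosenIso hc').symm).toMonoidHom
        = ((F.chosenIso hc').symm.toMonoidHom.comp (conjEquiv r L L' h).toMonoidHom).comp
          (F.chosenIso hc).toMonoidHom := by
      ext x; rfl
    rw [h1]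
    exact F.comp_mem _ _ (F.chosenIso_mem hc)
      (F.comp_mem _ _ (conjEquiv_mem F r L L' h) (F.inv_mem _ (F.chosenIso_mem hc')))⟩

/-- The image of `transport` in `Out_F(Q₀)`. -/
noncomputable def outTransport {Q₀ L L' : Subgroup S} (hc : F.FConj Q₀ L)
    (hc' : F.FConj Q₀ L') (r : S) (h : conjSub r L = L') : F.OutF Q₀ :=
  F.outMk Q₀ (F.transport hc hc' r h)

/-- The relative trace `tr_{N_T(L)}^{N_R(L)}` on `^αV`, for `T ≤ R`. -/
noncomputable def dpIndTrace (ρ : Representation (ZMod p) (F.OutF Q₀) V)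
    {L : Subgroup S} (hc : F.FConj Q₀ L) (T R : Subgroup S) (hTR : T ≤ R) :
    V →ₗ[ZMod p] V :=
  cosetTrace ((T ⊓ (normalizer (L : Set S))).subgroupOf (R ⊓ (normalizer (L : Set S)))) (F.dpAction ρ hc R)

/-- The restriction and induction maps of the Díaz–Park Mackey functor `S_{Q₀,V}`,
characterized on each direct summand by the formulas of Díaz–Park:
restriction along `T ≤ P` maps the summand of the class of `L` diagonally (via the
identifications `^{c_r∘α_L}V ≅ ^{α_{L'}}V`) into the summands of the `T`-classes of the
`P`-conjugates `L'` of `L` contained in `T`, and is zero on all other components;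
induction along `T ≤ R` maps the summand of the class of `L` into the summand of the
`R`-class of `L` by the relative trace `tr_{N_T(L)}^{N_R(L)}`. -/
structure SQVMaps (ρ : Representation (ZMod p) (F.OutF Q₀) V) where
  res : ∀ {T P : Subgroup S}, T ≤ P → (F.SQVModule ρ P →ₗ[ZMod p] F.SQVModule ρ T)
  ind : ∀ {T R : Subgroup S}, T ≤ R → (F.SQVModule ρ T →ₗ[ZMod p] F.SQVModule ρ R)
  res_spec : ∀ {T P : Subgroup S} (hTP : T ≤ P) (c : F.SQVIndex Q₀ P)
    (v : ↥(F.dpSummand ρ P (F.dpRep_fconj c))) (c' : F.SQVIndex Q₀ T)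
    (r : S), r ∈ P → (h : conjSub r (F.dpRep c) = F.dpRep c') →
      F.dpComp (res hTP (F.dpOf ρ P c v)) c'
        = ρ (F.outTransport (F.dpRep_fconj c) (F.dpRep_fconj c') r h) (v : V)
  res_spec₂ : ∀ {T P : Subgroup S} (hTP : T ≤ P) (c : F.SQVIndex Q₀ P)
    (v : ↥(F.dpSummand ρ P (F.dpRep_fconj c))) (c' : F.SQVIndex Q₀ T),
      (¬ ∃ r ∈ P, conjSub r (F.dpRep c) = F.dpRep c') →
      F.dpComp (res hTP (F.dpOf ρ P c v)) c' = 0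
  ind_spec : ∀ {T R : Subgroup S} (hTR : T ≤ R) (c : F.SQVIndex Q₀ T)
    (v : ↥(F.dpSummand ρ T (F.dpRep_fconj c))) (c' : F.SQVIndex Q₀ R)
    (r : S), r ∈ R → (h : conjSub r (F.dpRep c) = F.dpRep c') →
      F.dpComp (ind hTR (F.dpOf ρ T c v)) c'
        = ρ (F.outTransport (F.dpRep_fconj c) (F.dpRep_fconj c') r h)
            (F.dpIndTrace ρ (F.dpRep_fconj c) T R hTR (v : V))
  ind_spec₂ : ∀ {T R : Subgroup S} (hTR : T ≤ R) (c : F.SQVIndex Q₀ T)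
    (v : ↥(F.dpSummand ρ T (F.dpRep_fconj c))) (c' : F.SQVIndex Q₀ R),
      (¬ ∃ r ∈ R, conjSub r (F.dpRep c) = F.dpRep c') →
      F.dpComp (ind hTR (F.dpOf ρ T c v)) c' = 0

/-- A representation is simple (irreducible) if the module is nonzero and has no proper
nonzero invariant submodules. -/
def IsSimpleRep (ρ : Representation (ZMod p) (F.OutF Q₀) V) : Prop :=
  Nontrivial V ∧ ∀ W : Submodule (ZMod p) V,
    (∀ (g : F.OutF Q₀), ∀ v ∈ W, ρ g v ∈ W) → W = ⊥ ∨ W = ⊤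

end FusionSystem

end SQV

/-!
Parts (i)–(iii) are formal: a nonzero composite `Ind ∘ Res` makes all three modules nonzero;
the non-centric `T` can equal neither of the centric `P`, `R`, nor can `P` or `R` be all of `S`
(then `T` would be `R` or `P`); and `Z(S)` lies in every centric subgroup.

For (iv), suppose `P` is abelian. Then `P` centralizes every `L ≤ P`, so `N_P(L) = P` acts
trivially on `^αV` and `tr_L^P` is multiplication by `|P : L|`. This index is a power of `p`,
equal to `1` only if `L = P`, which would make `Q` `F`-conjugate to the centric `P`. Hence every
summand of `S_{Q,V}(P)` vanishes.
-/

lemma LinearMap.nontrivial_of_comp_ne_zero {R M N K : Type*} [Semiring R]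
    [AddCommMonoid M] [AddCommMonoid N] [AddCommMonoid K] [Module R M] [Module R N] [Module R K]
    {f : M →ₗ[R] N} {g : N →ₗ[R] K} (h : g ∘ₗ f ≠ 0) :
    Nontrivial M ∧ Nontrivial N ∧ Nontrivial K := by
  obtain ⟨x, hx⟩ := DFunLike.ne_iff.mp h
  have hfx : f x ≠ 0 := fun h0 => hx (by simp [h0])
  have hx0 : x ≠ 0 := fun h0 => hfx (by simp [h0])
  exact ⟨nontrivial_of_ne x 0 hx0, nontrivial_of_ne _ 0 hfx, nontrivial_of_ne _ 0 hx⟩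

lemma cosetTrace_eq_index_smul {p : ℕ} {V : Type*} [AddCommGroup V] [Module (ZMod p) V]
    {G : Type*} [Group G] [Finite G] (K : Subgroup G) {σ : G →* (V →ₗ[ZMod p] V)}
    (hσ : ∀ g, σ g = 1) : cosetTrace K σ = K.index • (1 : V →ₗ[ZMod p] V) := by
  let _ := Fintype.ofFinite (G ⧸ K)
  show ∑ x : G ⧸ K, σ (Quotient.out x) = _
  simp only [hσ, Finset.sum_const, Finset.card_univ, Subgroup.index, Nat.card_eq_fintype_card]

lemma cosetTrace_eq_zero_of_isPGroup {p : ℕ} [Fact p.Prime] {V : Type*} [AddCommGroup V]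
    [Module (ZMod p) V] {G : Type*} [Group G] [Finite G] (hG : IsPGroup p G)
    {K : Subgroup G} (hK : K ≠ ⊤) {σ : G →* (V →ₗ[ZMod p] V)} (hσ : ∀ g, σ g = 1) :
    cosetTrace K σ = 0 := by
  obtain ⟨n, hn⟩ := hG.index K
  have hn0 : n ≠ 0 := by
    rintro rfl
    exact hK (Subgroup.index_eq_one.mp hn)
  have hp : ((K.index : ℕ) : ZMod p) = 0 := by
    rw [ZMod.natCast_eq_zero_iff, hn]
    exact dvd_pow_self p hn0
  rw [cosetTrace_eq_index_smul K hσ, ← Nat.cast_smul_eq_nsmul (ZMod p), hp, zero_smul]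

namespace FusionSystem

variable {S : Type*} [Group S] (F : FusionSystem S)

lemma fconj_refl (P : Subgroup S) : F.FConj P P :=
  ⟨MulEquiv.refl P, (F.AutF P).one_mem⟩

variable {F}

lemma FConj.symm {P Q : Subgroup S} (h : F.FConj P Q) : F.FConj Q P :=
  let ⟨e, he⟩ := h
  ⟨e.symm, F.inv_mem e he⟩

lemma FConj.trans {P Q R : Subgroup S} (h₁ : F.FConj P Q) (h₂ : F.FConj Q R) :
    F.FConj P R :=
  let ⟨e₁, he₁⟩ := h₁
  let ⟨e₂, he₂⟩ := h₂
  ⟨e₁.trans e₂, F.comp_mem _ _ he₁ he₂⟩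

lemma Centric.of_fconj {P Q : Subgroup S} (hQ : F.Centric Q) (h : F.FConj P Q) :
    F.Centric P :=
  fun L hL => hQ L (h.symm.trans hL)

lemma Centric.center_le {P : Subgroup S} (hP : F.Centric P) : center S ≤ P :=
  fun _ hz => hP P (F.fconj_refl P) fun g _ => mem_center_iff.mp hz g

variable (F)

lemma toAutF_eq_one_of_mem_centralizer (L : Subgroup S) (g : normalizer (L : Set S))
    (hg : (g : S) ∈ centralizer (L : Set S)) : F.toAutF L g = 1 := by
  refine Subtype.ext (MulEquiv.ext fun w => Subtype.ext ?_)
  show (g : S) * w * (g : S)⁻¹ = w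
  rw [← mem_centralizer_iff.mp hg w w.2, mul_inv_cancel_right]

variable {Q₀ : Subgroup S} {p : ℕ} {V : Type*} [AddCommGroup V] [Module (ZMod p) V]

lemma dpAction_eq_one_of_le_centralizer (ρ : Representation (ZMod p) (F.OutF Q₀) V)
    {L P : Subgroup S} (hc : F.FConj Q₀ L) (hPL : P ≤ centralizer (L : Set S))
    (g : ↥(P ⊓ normalizer (L : Set S))) : F.dpAction ρ hc P g = 1 := by
  have hg : F.toAutF L (inclusion inf_le_right g) = 1 :=
    F.toAutF_eq_one_of_mem_centralizer L _ (hPL (mem_inf.mp g.2).1)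
  simp only [dpAction, dpActionAt, MonoidHom.comp_apply, hg, map_one]

variable [Finite S] [Fact p.Prime]

lemma dpSummand_eq_bot_of_le_centralizer (hS : IsPGroup p S) (hQ : ¬ F.Centric Q₀)
    (ρ : Representation (ZMod p) (F.OutF Q₀) V) {P L : Subgroup S} (hP : F.Centric P)
    (hc : F.FConj Q₀ L) (hLP : L ≤ P) (hPL : P ≤ centralizer (L : Set S)) :
    F.dpSummand ρ P hc = ⊥ := by
  have hPN : P ≤ normalizer (L : Set S) := hPL.trans (centralizer_le_normalizer _)
  have hK : L.subgroupOf (P ⊓ normalizer (L : Set S)) ≠ ⊤ := by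
    intro htop
    have hPL' : P ≤ L := (inf_eq_left.mpr hPN).symm.le.trans (subgroupOf_eq_top.mp htop)
    exact hQ (hP.of_fconj (le_antisymm hLP hPL' ▸ hc))
  rw [dpSummand, cosetTrace_eq_zero_of_isPGroup (hS.to_subgroup _) hK
    (F.dpAction_eq_one_of_le_centralizer ρ hc hPL), LinearMap.range_zero]

lemma subsingleton_SQVModule_of_isMulCommutative (hS : IsPGroup p S) (hQ : ¬ F.Centric Q₀)
    (ρ : Representation (ZMod p) (F.OutF Q₀) V) {P : Subgroup S} (hP : F.Centric P)
    [IsMulCommutative P] : Subsingleton (F.SQVModule ρ P) := by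
  have hPP : P ≤ centralizer (P : Set S) := le_centralizer_iff_isMulCommutative.mpr ‹_›
  have : ∀ c : F.SQVIndex Q₀ P, Subsingleton (F.dpSummand ρ P (F.dpRep_fconj c)) := fun c =>
    Submodule.subsingleton_iff_eq_bot.mpr <|
      F.dpSummand_eq_bot_of_le_centralizer hS hQ ρ hP _ (F.dpRep_le c)
        (hPP.trans (centralizer_le (F.dpRep_le c)))
  infer_instance

lemma not_isMulCommutative_of_nontrivial_SQVModule (hS : IsPGroup p S) (hQ : ¬ F.Centric Q₀)
    (ρ : Representation (ZMod p) (F.OutF Q₀) V) {P : Subgroup S} (hP : F.Centric P)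
    [Nontrivial (F.SQVModule ρ P)] : ¬ IsMulCommutative P := fun _ =>
  not_subsingleton (F.SQVModule ρ P) (F.subsingleton_SQVModule_of_isMulCommutative hS hQ ρ hP)

end FusionSystem

theorem contra_basic_properties_general
    (p : ℕ) [Fact p.Prime] {S : Type*} [Group S] [Finite S]
    (hS : IsPGroup p S) (F : FusionSystem S)
    (Q₀ : Subgroup S) (hQ : ¬ F.Centric Q₀)
    (V : Type*) [AddCommGroup V] [Module (ZMod p) V]
    (ρ : Representation (ZMod p) (F.OutF Q₀) V)
    (M : F.SQVMaps ρ) (P R : Subgroup S) (hP : F.Centric P) (hR : F.Centric R)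
    (hT : ¬ F.Centric (P ⊓ R))
    (hcomp : (M.ind (inf_le_right : P ⊓ R ≤ R)).comp
      (M.res (inf_le_left : P ⊓ R ≤ P)) ≠ 0)
    :
    (Nontrivial (F.SQVModule ρ P) ∧ Nontrivial (F.SQVModule ρ R) ∧
      Nontrivial (F.SQVModule ρ (P ⊓ R))) ∧
    (P ⊓ R < P ∧ P < ⊤ ∧ P ⊓ R < R ∧ R < ⊤) ∧
    Subgroup.center S ≤ P ⊓ R ∧
    (¬ IsMulCommutative P ∧ ¬ IsMulCommutative R) := by
  obtain ⟨hntP, hntT, hntR⟩ := LinearMap.nontrivial_of_comp_ne_zero hcomp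
  have hPT : P ≠ P ⊓ R := fun h => hT (h ▸ hP)
  have hRT : R ≠ P ⊓ R := fun h => hT (h ▸ hR)
  refine ⟨⟨hntP, hntR, hntT⟩,
    ⟨inf_le_left.lt_of_ne hPT.symm, lt_top_iff_ne_top.mpr fun h => hRT (by rw [h, top_inf_eq]),
      inf_le_right.lt_of_ne hRT.symm, lt_top_iff_ne_top.mpr fun h => hPT (by rw [h, inf_top_eq])⟩,
    le_inf hP.center_le hR.center_le,
    F.not_isMulCommutative_of_nontrivial_SQVModule hS hQ ρ hP,
    F.not_isMulCommutative_of_nontrivial_SQVModule hS hQ ρ hR⟩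

/-- Lemma 3.4: under Hypothesis (Contra): (i) `S_{Q,V}(P)`, `S_{Q,V}(R)`
and `S_{Q,V}(T)` are nonzero; (ii) `T < P < S` and `T < R < S`; (iii) `Z(S) ≤ T`;
(iv) `P` and `R` are not abelian. -/
theorem contra_basic_properties
    (p : ℕ) [Fact p.Prime] (hodd : Odd p) {S : Type*} [Group S] [Finite S]
    (hS : IsPGroup p S) (F : FusionSystem S) (hF : F.Saturated p)
    (Q₀ : Subgroup S) (hQ : ¬ F.Centric Q₀)
    (V : Type*) [AddCommGroup V] [Module (ZMod p) V]
    (ρ : Representation (ZMod p) (F.OutF Q₀) V) (hρ : F.IsSimpleRep ρ)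
    (M : F.SQVMaps ρ) (P R : Subgroup S) (hP : F.Centric P) (hR : F.Centric R)
    (hT : ¬ F.Centric (P ⊓ R))
    (hcomp : (M.ind (inf_le_right : P ⊓ R ≤ R)).comp
      (M.res (inf_le_left : P ⊓ R ≤ P)) ≠ 0)
    :
    (Nontrivial (F.SQVModule ρ P) ∧ Nontrivial (F.SQVModule ρ R) ∧
      Nontrivial (F.SQVModule ρ (P ⊓ R))) ∧
    (P ⊓ R < P ∧ P < ⊤ ∧ P ⊓ R < R ∧ R < ⊤) ∧
    Subgroup.center S ≤ P ⊓ R ∧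
    (¬ IsMulCommutative P ∧ ¬ IsMulCommutative R) :=
  contra_basic_properties_general p hS F Q₀ hQ V ρ M P R hP hR hT hcomp
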